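/- arXiv:2307.09111 — 9 statements merged into one kernel-verified Lean document; each statement's English description precedes it below -/
import Mathlib

section
/- In the non-progressive threshold model on the star graph K_{1,n-1} with strict majority thresholds τ(v)=⌈(d(v)+1)/2⌉, the minimum size of an ordinary target set equals ⌈n/2⌉+1. -/
open Finset
open scoped Classical

variable {V : Type*}

noncomputable def Qseq (G : SimpleGraph V) [Fintype V] (τ : V → ℕ) (S : ℕ → Finset V) :
    ℕ → Finset V
  | 0 => ∅
  | i + 1 => Finset.univ.filter fun v =>
      τ v ≤ (G.neighborFinset v ∩ (S i ∪ Qseq G τ S i)).card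

def IsTTS (G : SimpleGraph V) [Fintype V] (τ : V → ℕ) (S : ℕ → Finset V) (k : ℕ) : Prop :=
  S k = ∅ ∧ Qseq G τ S k = Finset.univ

def ttsSize (S : ℕ → Finset V) (k : ℕ) : ℕ := ∑ i ∈ Finset.range (k + 1), (S i).card

noncomputable def strictMaj (G : SimpleGraph V) [Fintype V] (v : V) : ℕ := (G.degree v + 2) / 2

noncomputable def npStep (G : SimpleGraph V) [Fintype V] (τ : V → ℕ) (A : Finset V) : Finset V :=
  Finset.univ.filter fun v => τ v ≤ (G.neighborFinset v ∩ A).card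

def IsTS (G : SimpleGraph V) [Fintype V] (τ : V → ℕ) (S : Finset V) : Prop :=
  ∃ i : ℕ, (npStep G τ)^[i] S = Finset.univ

noncomputable def MTT (G : SimpleGraph V) [Fintype V] (τ : V → ℕ) : ℕ :=
  sInf {m | ∃ (S : ℕ → Finset V) (k : ℕ), IsTTS G τ S k ∧ ttsSize S k = m}

/-- The star graph `K_{1,n-1}` on `Fin n`, with center the vertex with value `0`. -/
def starGraph (n : ℕ) : SimpleGraph (Fin n) where
  Adj v u := v ≠ u ∧ (v.val = 0 ∨ u.val = 0)
  symm := by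
    constructor
    intro v u h
    exact ⟨h.1.symm, h.2.symm⟩
  loopless := by
    constructor
    intro v h
    exact h.1 rfl

section StarAux

variable {n : ℕ} [NeZero n]

lemma star_nbr_zero : (starGraph n).neighborFinset 0 = Finset.univ.erase 0 := by
  ext u
  rw [SimpleGraph.mem_neighborFinset]
  simp only [SimpleGraph.mem_neighborFinset, starGraph, Finset.mem_erase, Finset.mem_univ,
    and_true]
  constructor
  · rintro ⟨h, -⟩; exact fun e => h e.symm
  · intro h; exact ⟨fun e => h e.symm, Or.inl (by simp)⟩

lemma star_nbr_ne (u : Fin n) (hu : u ≠ 0) : (starGraph n).neighborFinset u = {0} := by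
  ext w
  rw [SimpleGraph.mem_neighborFinset]
  simp only [SimpleGraph.mem_neighborFinset, starGraph, Finset.mem_singleton]
  constructor
  · rintro ⟨h1, h2 | h2⟩
    · exact absurd (Fin.ext h2) hu
    · exact Fin.ext h2
  · rintro rfl
    exact ⟨hu, Or.inr (by simp)⟩

lemma star_maj_zero : strictMaj (starGraph n) 0 = (n + 1) / 2 := by
  have h1 : (starGraph n).degree 0 = n - 1 := by
    rw [SimpleGraph.degree, star_nbr_zero, Finset.card_erase_of_mem (Finset.mem_univ _)]
    simp
  rw [strictMaj, h1]
  have : 1 ≤ n := Nat.one_le_iff_ne_zero.2 (NeZero.ne n)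
  omega

lemma star_maj_ne (u : Fin n) (hu : u ≠ 0) : strictMaj (starGraph n) u = 1 := by
  rw [strictMaj, SimpleGraph.degree, star_nbr_ne u hu]
  simp

lemma mem_npStep {A : Finset (Fin n)} {v : Fin n} :
    v ∈ npStep (starGraph n) (strictMaj (starGraph n)) A ↔
      strictMaj (starGraph n) v ≤ ((starGraph n).neighborFinset v ∩ A).card := by
  simp only [npStep, Finset.mem_filter, Finset.mem_univ, true_and]
  congr!

lemma npStep_inv (hn : 2 ≤ n) (A : Finset (Fin n))
    (h : ¬ ((0 : Fin n) ∈ A ∧ (n + 1) / 2 ≤ (A.erase 0).card)) :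
    ¬ ((0 : Fin n) ∈ npStep (starGraph n) (strictMaj (starGraph n)) A ∧
      (n + 1) / 2 ≤ ((npStep (starGraph n) (strictMaj (starGraph n)) A).erase 0).card) := by
  by_cases h0 : (0 : Fin n) ∈ A
  · have hcard : (A.erase 0).card < (n + 1) / 2 := by
      by_contra hc; exact h ⟨h0, le_of_not_gt hc⟩
    rintro ⟨hc, -⟩
    rw [mem_npStep, star_maj_zero, star_nbr_zero] at hc
    have : Finset.univ.erase 0 ∩ A = A.erase 0 := by
      ext w; simp [Finset.mem_erase, and_comm]
    rw [this] at hc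
    omega
  · rintro ⟨-, hc⟩
    have hempty : (npStep (starGraph n) (strictMaj (starGraph n)) A).erase 0 = ∅ := by
      ext u
      simp only [Finset.mem_erase, Finset.notMem_empty, iff_false, not_and]
      intro hu hmem
      rw [mem_npStep, star_maj_ne u hu, star_nbr_ne u hu] at hmem
      have : ({0} : Finset (Fin n)) ∩ A = ∅ := by
        ext w; simp only [Finset.mem_inter, Finset.mem_singleton, Finset.notMem_empty,
          iff_false, not_and]
        rintro rfl; exact h0
      rw [this] at hmem
      simp at hmem
    rw [hempty] at hc
    simp at hc
    omega

end StarAux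

/-- In the non-progressive threshold model on the star `K_{1,n-1}` (`n ≥ 2`)
with strict majority thresholds `τ(v) = ⌈(d(v)+1)/2⌉`, the minimum size of an ordinary
target set equals `⌈n/2⌉ + 1`. -/
theorem stmt0 (n : ℕ) (hn : 2 ≤ n) :
    IsLeast {m : ℕ | ∃ S : Finset (Fin n),
        IsTS (starGraph n) (strictMaj (starGraph n)) S ∧ S.card = m}
      ((n + 1) / 2 + 1) := by
  haveI : NeZero n := ⟨by omega⟩
  constructor
  · -- membership: exhibit a target set of size (n+1)/2 + 1
    have hle : (n + 1) / 2 ≤ (Finset.univ.erase (0 : Fin n)).card := by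
      rw [Finset.card_erase_of_mem (Finset.mem_univ _)]
      simp only [Finset.card_univ, Fintype.card_fin]
      omega
    obtain ⟨T, hTsub, hTcard⟩ := Finset.exists_subset_card_eq hle
    refine ⟨insert 0 T, ⟨1, ?_⟩, ?_⟩
    · rw [Function.iterate_one]
      ext v
      simp only [Finset.mem_univ, iff_true, mem_npStep]
      by_cases hv : v = 0
      · subst hv
        rw [star_maj_zero, star_nbr_zero]
        calc (n + 1) / 2 = T.card := hTcard.symm
          _ ≤ (Finset.univ.erase 0 ∩ insert 0 T).card := by
              apply Finset.card_le_card
              intro x hx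
              exact Finset.mem_inter.2 ⟨hTsub hx, Finset.mem_insert_of_mem hx⟩
      · rw [star_maj_ne v hv, star_nbr_ne v hv]
        have : (0 : Fin n) ∈ ({0} : Finset (Fin n)) ∩ insert 0 T := by simp
        exact Finset.card_pos.2 ⟨0, this⟩
    · rw [Finset.card_insert_of_notMem, hTcard]
      intro h0
      exact absurd (Finset.mem_erase.1 (hTsub h0)).1 (by simp)
  · -- lower bound
    rintro m ⟨S, ⟨i, hi⟩, rfl⟩
    by_contra hlt
    push_neg at hlt
    have hbadS : ¬ ((0 : Fin n) ∈ S ∧ (n + 1) / 2 ≤ (S.erase 0).card) := by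
      rintro ⟨h0, hc⟩
      have := Finset.card_erase_of_mem h0
      omega
    have key : ∀ j, ¬ ((0 : Fin n) ∈ (npStep (starGraph n) (strictMaj (starGraph n)))^[j] S ∧
        (n + 1) / 2 ≤ (((npStep (starGraph n) (strictMaj (starGraph n)))^[j] S).erase 0).card) := by
      intro j
      induction j with
      | zero => simpa using hbadS
      | succ k ih =>
        rw [Function.iterate_succ_apply']
        exact npStep_inv hn _ ih
    refine key i ?_
    rw [hi]
    constructor
    · exact Finset.mem_univ _
    · rw [Finset.card_erase_of_mem (Finset.mem_univ _)]
      simp only [Finset.card_univ, Fintype.card_fin]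
      omega
end

section
/- In the non-progressive threshold model on the star K_{1,n-1} with strict majority thresholds, the minimum size of a timed target set equals 2 (achieved by targeting the center at steps 0 and 1), while no timed target set of size 1 exists. -/
/-!
Strict-majority thresholds are positive, so a vertex can only become active when it has an
active neighbour. On a bipartite graph the activity of the non-progressive process driven by
a set lying inside one side therefore stays inside one side, alternating between them, and
never covers both. A timed target set of size at most one is such a process started from at
most one vertex, so it never activates everything. Targeting the centre of the star twice
works: the first time it activates all leaves, the second time it completes them to the whole
vertex set, which then stays active.
-/

open Finset
open scoped Classical

variable {V : Type*}

section Threshold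

variable [Fintype V] {G : SimpleGraph V} {τ : V → ℕ}

lemma strictMaj_pos (G : SimpleGraph V) (v : V) : 0 < strictMaj G v := by
  unfold strictMaj
  omega

lemma strictMaj_le_degree {v : V} (hv : 0 < G.degree v) : strictMaj G v ≤ G.degree v := by
  unfold strictMaj
  omega

lemma npStep_empty (hτ : ∀ v, 0 < τ v) : npStep G τ ∅ = ∅ := by
  ext v
  simp [npStep, (hτ v).ne']

lemma npStep_univ (hτ : ∀ v, τ v ≤ G.degree v) : npStep G τ univ = univ := by
  ext v
  simp [npStep, hτ v]

lemma Qseq_succ [DecidableEq V] (S : ℕ → Finset V) (i : ℕ) :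
    Qseq G τ S (i + 1) = npStep G τ (S i ∪ Qseq G τ S i) := by
  rw [Qseq, npStep]
  congr!

lemma exists_Qseq_eq_iterate (hτ : ∀ v, 0 < τ v) (S : ℕ → Finset V) (k : ℕ)
    (hS : ∑ i ∈ range k, (S i).card ≤ 1) :
    ∃ A : Finset V, A.card ≤ ∑ i ∈ range k, (S i).card ∧
      ∃ m, Qseq G τ S k = (npStep G τ)^[m] A := by
  induction k with
  | zero => exact ⟨∅, by simp, 0, rfl⟩
  | succ k ih =>
    rw [sum_range_succ] at hS ⊢
    obtain ⟨A, hA, m, hQ⟩ := ih (by omega)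
    rw [Qseq_succ, hQ]
    rcases (S k).eq_empty_or_nonempty with hSk | hSk
    · exact ⟨A, by omega, m + 1, by rw [hSk, empty_union, Function.iterate_succ_apply']⟩
    · have hA : A = ∅ := card_eq_zero.1 (by have := hSk.card_pos; omega)
      refine ⟨S k, by omega, 1, ?_⟩
      rw [hA, Function.iterate_fixed (npStep_empty hτ), union_empty]
      rfl

lemma IsTTS.exists_isTS {S : ℕ → Finset V} {k : ℕ} (hS : IsTTS G τ S k) (hτ : ∀ v, 0 < τ v)
    (hsize : ttsSize S k ≤ 1) : ∃ A : Finset V, A.card ≤ 1 ∧ IsTS G τ A := by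
  have hk : ∑ i ∈ range k, (S i).card ≤ 1 := by
    rw [ttsSize, sum_range_succ] at hsize
    omega
  obtain ⟨A, hA, m, hQ⟩ := exists_Qseq_eq_iterate hτ S k hk
  exact ⟨A, hA.trans hk, m, hQ ▸ hS.2⟩

variable {s t : Set V}

lemma npStep_subset_of_isBipartiteWith (h : G.IsBipartiteWith s t) (hτ : ∀ v, 0 < τ v)
    {A : Finset V} (hA : ↑A ⊆ s) : ↑(npStep G τ A) ⊆ t := by
  intro v hv
  simp only [npStep, coe_filter, mem_univ, true_and, Set.mem_ofPred_eq] at hv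
  obtain ⟨u, hu⟩ := card_pos.1 ((hτ v).trans_le hv)
  rw [mem_inter, SimpleGraph.mem_neighborFinset] at hu
  exact h.symm.mem_of_mem_adj' (hA hu.2) hu.1

lemma not_isTS_of_isBipartiteWith (h : G.IsBipartiteWith s t) (hτ : ∀ v, 0 < τ v)
    (hs : s.Nonempty) (ht : t.Nonempty) {A : Finset V} (hA : ↑A ⊆ s ∨ ↑A ⊆ t) :
    ¬ IsTS G τ A := by
  have one_side : ∀ m, ↑((npStep G τ)^[m] A) ⊆ s ∨ ↑((npStep G τ)^[m] A) ⊆ t := by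
    intro m
    induction m with
    | zero => exact hA
    | succ m ih =>
      rw [Function.iterate_succ_apply']
      exact ih.symm.imp (npStep_subset_of_isBipartiteWith h.symm hτ)
        (npStep_subset_of_isBipartiteWith h hτ)
  rintro ⟨m, hm⟩
  obtain ⟨u, hu⟩ := hs
  obtain ⟨w, hw⟩ := ht
  rcases one_side m with hsub | hsub <;> rw [hm, coe_univ] at hsub
  · exact Set.disjoint_left.1 h.disjoint (hsub (Set.mem_univ w)) hw
  · exact Set.disjoint_left.1 h.disjoint hu (hsub (Set.mem_univ u))

theorem IsTTS.two_le_ttsSize_of_isBipartiteWith {S : ℕ → Finset V} {k : ℕ}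
    (hS : IsTTS G τ S k) (h : G.IsBipartiteWith s sᶜ) (hτ : ∀ v, 0 < τ v)
    (hs : s.Nonempty) (hs' : sᶜ.Nonempty) : 2 ≤ ttsSize S k := by
  by_contra! hsize
  obtain ⟨A, hA, hTS⟩ := hS.exists_isTS hτ (by omega)
  refine not_isTS_of_isBipartiteWith h hτ hs hs' ?_ hTS
  by_cases hAs : ∃ a ∈ A, a ∈ s
  · obtain ⟨a, ha, has⟩ := hAs
    exact .inl fun u hu => card_le_one.1 hA u hu a ha ▸ has
  · push Not at hAs
    exact .inr hAs

end Threshold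

section Star

variable {n : ℕ} {c : Fin n}

lemma starGraph_adj {v u : Fin n} : (starGraph n).Adj v u ↔ v ≠ u ∧ (v.val = 0 ∨ u.val = 0) :=
  Iff.rfl

lemma starGraph_neighborFinset_of_ne (hc : c.val = 0) {v : Fin n} (hv : v ≠ c) :
    (starGraph n).neighborFinset v = {c} := by
  ext u
  simp only [SimpleGraph.mem_neighborFinset, starGraph_adj, mem_singleton, ne_eq, ← Fin.val_inj,
    hc]
  have hv0 : v.val ≠ 0 := fun h => hv (Fin.ext (h.trans hc.symm))
  omega

lemma isBipartiteWith_starGraph (hc : c.val = 0) :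
    (starGraph n).IsBipartiteWith {c} {c}ᶜ where
  disjoint := disjoint_compl_right
  mem_of_adj v w hvw := by
    simp only [starGraph_adj, Set.mem_singleton_iff, Set.mem_compl_iff, ne_eq, ← Fin.val_inj,
      hc] at hvw ⊢
    omega

lemma degree_starGraph_of_ne (hc : c.val = 0) {v : Fin n} (hv : v ≠ c) :
    (starGraph n).degree v = 1 := by
  rw [← SimpleGraph.card_neighborFinset_eq_degree, starGraph_neighborFinset_of_ne hc hv,
    card_singleton]

lemma degree_starGraph_pos (hn : 2 ≤ n) (hc : c.val = 0) (v : Fin n) :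
    0 < (starGraph n).degree v := by
  by_cases hv : v = c
  · refine card_pos.2 ⟨⟨1, hn⟩, ?_⟩
    rw [SimpleGraph.mem_neighborFinset, starGraph_adj, hv]
    exact ⟨fun h => by simp [← Fin.val_inj, hc] at h, .inl hc⟩
  · rw [degree_starGraph_of_ne hc hv]
    exact one_pos

lemma isTTS_starGraph_center_twice (hn : 2 ≤ n) (hc : c.val = 0) :
    IsTTS (starGraph n) (strictMaj (starGraph n)) (fun i => if i ≤ 1 then {c} else ∅) 2 := by
  set S : ℕ → Finset (Fin n) := fun i => if i ≤ 1 then {c} else ∅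
  have leaves_active : ∀ v, v ≠ c → v ∈ Qseq (starGraph n) (strictMaj (starGraph n)) S 1 := by
    intro v hv
    simp [Qseq, S, strictMaj, degree_starGraph_of_ne hc hv, starGraph_neighborFinset_of_ne hc hv]
  have all_active : S 1 ∪ Qseq (starGraph n) (strictMaj (starGraph n)) S 1 = univ := by
    refine eq_univ_iff_forall.2 fun v => ?_
    by_cases hv : v = c
    · simp [S, hv]
    · exact mem_union_right _ (leaves_active v hv)
  refine ⟨by simp [S], ?_⟩
  rw [Qseq_succ, all_active]
  exact npStep_univ fun v => strictMaj_le_degree (degree_starGraph_pos hn hc v)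

end Star

/-- On the star `K_{1,n-1}` (`n ≥ 3`) with strict majority thresholds, the
sequence targeting the center at steps 0 and 1 (and nothing afterwards) is a timed target
set of size 2, and the minimum size of a timed target set equals 2 (in particular there is
no timed target set of size 1). -/
theorem stmt1 (n : ℕ) (hn : 3 ≤ n) (c : Fin n) (hc : c.val = 0) :
    (IsTTS (starGraph n) (strictMaj (starGraph n))
        (fun i => if i ≤ 1 then {c} else ∅) 2
      ∧ ttsSize (fun i => if i ≤ 1 then ({c} : Finset (Fin n)) else ∅) 2 = 2)
    ∧ IsLeast {m : ℕ | ∃ (S : ℕ → Finset (Fin n)) (k : ℕ),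
        IsTTS (starGraph n) (strictMaj (starGraph n)) S k ∧ ttsSize S k = m} 2 := by
  have hTTS := isTTS_starGraph_center_twice (by omega) hc
  have hsize : ttsSize (fun i => if i ≤ 1 then ({c} : Finset (Fin n)) else ∅) 2 = 2 := by
    simp [ttsSize, sum_range_succ]
  refine ⟨⟨hTTS, hsize⟩, ⟨_, 2, hTTS, hsize⟩, ?_⟩
  rintro m ⟨S, k, hS, rfl⟩
  exact hS.two_le_ttsSize_of_isBipartiteWith (isBipartiteWith_starGraph hc)
    (strictMaj_pos _) ⟨c, rfl⟩ ⟨⟨1, by omega⟩, by simp [← Fin.val_inj, hc]⟩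
end

section
/- Let G be a bipartite graph with parts X and Y, τ a threshold assignment, and S_0,…,S_k a timed target set with induced positive-set sequence Q_0,…,Q_k. Let S_e=S_0∪S_2∪… and S_o=S_1∪S_3∪…. If D⊆V satisfies D∩S_e∩X=∅ and D∩S_o∩Y=∅, and if d_D(u)>d(u)−τ(u) for every u∈D, then D=∅. -/
/-!
Induction on time: a vertex of `D` that becomes positive at time `t + 1` has, by the degree
condition on `D`, a neighbour in `D ∩ (S_t ∪ Q_t)`; the conditions on `D ∩ S_e` and `D ∩ S_o`
place that neighbour in `X` exactly when `t` is odd, so the vertex itself lies in `X` exactly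
when `t + 1` is odd. At time `k` every vertex is positive, so a vertex of `D` and any of its
neighbours in `D` (one exists, again by the degree condition) would lie on the same side.
-/

open Finset
open scoped Classical

variable {V : Type*}

section Bipartite

variable {G : SimpleGraph V} {X Y : Finset V}

theorem mem_iff_notMem_of_adj (hpart : ∀ v, v ∈ X ↔ v ∉ Y)
    (hbip : ∀ a b, G.Adj a b → (a ∈ X ↔ b ∈ Y)) {u w : V} (h : G.Adj u w) :
    u ∈ X ↔ w ∉ X := by
  rw [hbip u w h, hpart w, not_not]

theorem exists_adj_mem_inter_of_tsub_lt [Fintype V] {τ : ℕ} {u : V} {A D : Finset V}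
    (hD : G.degree u - τ < #(G.neighborFinset u ∩ D))
    (hA : τ ≤ #(G.neighborFinset u ∩ A)) :
    ∃ w ∈ A ∩ D, G.Adj u w := by
  by_contra! h
  have hsub : G.neighborFinset u ∩ A ⊆ G.neighborFinset u \ D := fun w hw => by
    simp only [mem_inter, mem_sdiff, SimpleGraph.mem_neighborFinset] at hw ⊢
    exact ⟨hw.1, fun hwD => h w (mem_inter.mpr ⟨hw.2, hwD⟩) hw.1⟩
  have hsplit := card_sdiff_add_card_inter (G.neighborFinset u) D
  rw [G.card_neighborFinset_eq_degree] at hsplit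
  have := card_le_card hsub
  omega

variable {S : ℕ → Finset V} {k : ℕ} {D : Finset V}

theorem mem_iff_odd_of_mem_seed (hpart : ∀ v, v ∈ X ↔ v ∉ Y)
    (hDX : D ∩ (((Finset.range (k + 1)).filter fun i => Even i).biUnion S) ∩ X = ∅)
    (hDY : D ∩ (((Finset.range (k + 1)).filter fun i => Odd i).biUnion S) ∩ Y = ∅)
    {t : ℕ} {w : V} (ht : t ≤ k) (hwS : w ∈ S t) (hwD : w ∈ D) :
    w ∈ X ↔ Odd t := by
  rcases Nat.even_or_odd t with he | ho
  · refine iff_of_false (fun hwX => eq_empty_iff_forall_notMem.mp hDX w ?_)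
      (Nat.not_odd_iff_even.mpr he)
    simp only [mem_inter, mem_biUnion, mem_filter, mem_range]
    exact ⟨⟨hwD, t, ⟨by omega, he⟩, hwS⟩, hwX⟩
  · refine iff_of_true ((hpart w).mpr fun hwY => eq_empty_iff_forall_notMem.mp hDY w ?_) ho
    simp only [mem_inter, mem_biUnion, mem_filter, mem_range]
    exact ⟨⟨hwD, t, ⟨by omega, ho⟩, hwS⟩, hwY⟩

theorem mem_iff_odd_of_mem_Qseq [Fintype V] (hpart : ∀ v, v ∈ X ↔ v ∉ Y)
    (hbip : ∀ a b, G.Adj a b → (a ∈ X ↔ b ∈ Y)) {τ : V → ℕ}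
    (hDX : D ∩ (((Finset.range (k + 1)).filter fun i => Even i).biUnion S) ∩ X = ∅)
    (hDY : D ∩ (((Finset.range (k + 1)).filter fun i => Odd i).biUnion S) ∩ Y = ∅)
    (hdeg : ∀ u ∈ D, G.degree u - τ u < #(G.neighborFinset u ∩ D)) :
    ∀ t ≤ k, ∀ u ∈ D, u ∈ Qseq G τ S t → (u ∈ X ↔ Odd t) := by
  intro t
  induction t with
  | zero => simp [Qseq]
  | succ t ih =>
    intro ht u hu hq
    rw [Qseq, mem_filter] at hq
    obtain ⟨w, hw, huw⟩ := exists_adj_mem_inter_of_tsub_lt (hdeg u hu) hq.2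
    obtain ⟨hwSQ, hwD⟩ := mem_inter.mp hw
    have hw_side : w ∈ X ↔ Odd t := by
      rcases mem_union.mp hwSQ with hwS | hwQ
      · exact mem_iff_odd_of_mem_seed hpart hDX hDY (by omega) hwS hwD
      · exact ih (by omega) w hwD hwQ
    rw [mem_iff_notMem_of_adj hpart hbip huw, hw_side, Nat.odd_add_one]

end Bipartite

theorem stmt2_general [Fintype V] (G : SimpleGraph V) (X Y : Finset V)
    (hpart : ∀ v, v ∈ X ↔ v ∉ Y)
    (hbip : ∀ a b, G.Adj a b → (a ∈ X ↔ b ∈ Y))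
    (τ : V → ℕ)
    (S : ℕ → Finset V) (k : ℕ) (hS : IsTTS G τ S k)
    (D : Finset V)
    (hDX : D ∩ (((Finset.range (k + 1)).filter fun i => Even i).biUnion S) ∩ X = ∅)
    (hDY : D ∩ (((Finset.range (k + 1)).filter fun i => Odd i).biUnion S) ∩ Y = ∅)
    (hdeg : ∀ u ∈ D, G.degree u - τ u < (G.neighborFinset u ∩ D).card) :
    D = ∅ := by
  by_contra hD
  obtain ⟨u, hu⟩ := nonempty_iff_ne_empty.mpr hD
  obtain ⟨w, hw⟩ := card_pos.mp (pos_of_gt (hdeg u hu))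
  obtain ⟨huw, hwD⟩ := mem_inter.mp hw
  have hside : ∀ v ∈ D, v ∈ X ↔ Odd k := fun v hv =>
    mem_iff_odd_of_mem_Qseq hpart hbip hDX hDY hdeg k le_rfl v hv (hS.2 ▸ mem_univ v)
  have := mem_iff_notMem_of_adj hpart hbip ((G.mem_neighborFinset u w).mp huw)
  rw [hside u hu, hside w hwD] at this
  exact iff_not_self this

/-- Claim 1 in Lemma 2: Let `G` be bipartite with parts `X`, `Y`, `τ` a
threshold assignment, and `S_0, …, S_k` a timed target set. With `S_e = S_0 ∪ S_2 ∪ …`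
and `S_o = S_1 ∪ S_3 ∪ …`, if `D ⊆ V` satisfies `D ∩ S_e ∩ X = ∅` and `D ∩ S_o ∩ Y = ∅`,
and `d_D(u) > d(u) − τ(u)` for every `u ∈ D`, then `D = ∅`. -/
theorem stmt2 [Fintype V] (G : SimpleGraph V) (X Y : Finset V)
    (hpart : ∀ v, v ∈ X ↔ v ∉ Y)
    (hbip : ∀ a b, G.Adj a b → (a ∈ X ↔ b ∈ Y))
    (τ : V → ℕ) (hτ : ∀ v, τ v ≤ G.degree v)
    (S : ℕ → Finset V) (k : ℕ) (hS : IsTTS G τ S k)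
    (D : Finset V)
    (hDX : D ∩ (((Finset.range (k + 1)).filter fun i => Even i).biUnion S) ∩ X = ∅)
    (hDY : D ∩ (((Finset.range (k + 1)).filter fun i => Odd i).biUnion S) ∩ Y = ∅)
    (hdeg : ∀ u ∈ D, G.degree u - τ u < (G.neighborFinset u ∩ D).card) :
    D = ∅ :=
  stmt2_general G X Y hpart hbip τ S k hS D hDX hDY hdeg
end

section
/- Let G be a bipartite graph with parts X,Y, τ a threshold assignment, and S_0,…,S_k a timed target set. Define S_e=S_0∪S_2∪… and S_o=S_1∪S_3∪…. If D⊆V satisfies D∩S_e∩X=∅ and D∩S_o∩Y=∅, then the number of edges of the induced subgraph G[D] satisfies |E(G[D])| ≤ Σ_{u∈D}(d(u)−τ(u)). -/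
open Finset
open scoped Classical

variable {V : Type*}

/-
Give every vertex `u` an activation time `t u`: the first time of the right parity (even for
`X`, odd for `Y`) at which `u ∈ Q_{t u}`, so that at time `t u - 1` at least `τ u` neighbours
of `u` were active (in `S ∪ Q`). Charge each edge `uv` of `G[D]` to an endpoint `u` whose
partner `v` was not yet active at time `t u - 1`; then `u` carries at most `d(u) - τ(u)` edges.
Every edge gets charged: `t u - 1` has the parity of `v`, so the hypothesis on `D` forbids
`v ∈ S_{t u - 1}`, and `v ∈ Q_{t u - 1}` would force `t v < t u`; the same holds with `u` and
`v` swapped.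
-/

theorem card_filter_edgeFinset_le_sum_card [Fintype V] (G : SimpleGraph V) (D : Finset V)
    (C : V → Finset V) (hC : ∀ u ∈ D, ∀ v ∈ D, G.Adj u v → v ∈ C u ∨ u ∈ C v) :
    #(G.edgeFinset.filter fun e => ∀ x ∈ e, x ∈ D) ≤ ∑ u ∈ D, #(C u) := by
  have hcover : (G.edgeFinset.filter fun e => ∀ x ∈ e, x ∈ D) ⊆
      D.biUnion fun u => (C u).image fun v => s(u, v) := by
    intro e he
    induction e using Sym2.ind with
    | h u v =>
      simp only [mem_filter, SimpleGraph.mem_edgeFinset, SimpleGraph.mem_edgeSet,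
        Sym2.mem_iff, forall_eq_or_imp, forall_eq] at he
      obtain ⟨hadj, hu, hv⟩ := he
      simp only [mem_biUnion, mem_image]
      rcases hC u hu v hv hadj with h | h
      · exact ⟨u, hu, v, h, rfl⟩
      · exact ⟨v, hv, u, h, Sym2.eq_swap⟩
  calc _ ≤ #(D.biUnion fun u => (C u).image fun v => s(u, v)) := card_le_card hcover
    _ ≤ ∑ u ∈ D, #((C u).image fun v => s(u, v)) := card_biUnion_le
    _ ≤ ∑ u ∈ D, #(C u) := sum_le_sum fun u _ => card_image_le

theorem notMem_of_inter_biUnion_inter_eq_empty {S : ℕ → Finset V} {D X : Finset V} {k : ℕ}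
    {p : ℕ → Prop} [DecidablePred p]
    (h : D ∩ ((range (k + 1)).filter p).biUnion S ∩ X = ∅) {w : V} (hwD : w ∈ D) (hwX : w ∈ X)
    {i : ℕ} (hik : i ≤ k) (hi : p i) : w ∉ S i := fun hwS =>
  (eq_empty_iff_forall_notMem.mp h) w <| mem_inter.mpr ⟨mem_inter.mpr ⟨hwD,
    mem_biUnion.mpr ⟨i, mem_filter.mpr ⟨mem_range.mpr (Nat.lt_succ_of_le hik), hi⟩, hwS⟩⟩, hwX⟩

section ActivationTime

variable (X : Finset V) (Q : ℕ → Finset V)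

noncomputable def activationTime (u : V) : ℕ :=
  sInf {i | (Even i ↔ u ∈ X) ∧ u ∈ Q i}

variable {Q} {k : ℕ}

variable {X} in
theorem activationTime_le {u : V} {i : ℕ} (hi : Even i ↔ u ∈ X)
    (hu : u ∈ Q i) : activationTime X Q u ≤ i :=
  Nat.sInf_le ⟨hi, hu⟩

variable [Fintype V]

theorem exists_activation (hk : Q k = univ) (hk1 : Q (k + 1) = univ) (u : V) :
    ∃ i ≤ k + 1, (Even i ↔ u ∈ X) ∧ u ∈ Q i := by
  by_cases h : Even k ↔ u ∈ X
  · exact ⟨k, k.le_succ, h, by simp [hk]⟩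
  · exact ⟨k + 1, le_rfl, by rw [Nat.even_add_one]; tauto, by simp [hk1]⟩

theorem activationTime_spec (hk : Q k = univ) (hk1 : Q (k + 1) = univ) (u : V) :
    (Even (activationTime X Q u) ↔ u ∈ X) ∧ u ∈ Q (activationTime X Q u) := by
  obtain ⟨i, -, hi⟩ := exists_activation X hk hk1 u
  exact Nat.sInf_mem (s := {i | (Even i ↔ u ∈ X) ∧ u ∈ Q i}) ⟨i, hi⟩

theorem activationTime_le_succ (hk : Q k = univ) (hk1 : Q (k + 1) = univ) (u : V) :
    activationTime X Q u ≤ k + 1 := by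
  obtain ⟨i, hik, hi, hu⟩ := exists_activation X hk hk1 u
  exact (activationTime_le hi hu).trans hik

theorem activationTime_pos (hQ0 : Q 0 = ∅) (hk : Q k = univ) (hk1 : Q (k + 1) = univ)
    (u : V) : 0 < activationTime X Q u := by
  have hu := (activationTime_spec X hk hk1 u).2
  refine Nat.pos_of_ne_zero fun h => ?_
  simp [h, hQ0] at hu

variable {X} in
theorem activationTime_lt_of_mem {S : ℕ → Finset V} {D : Finset V}
    (hQ0 : Q 0 = ∅) (hk : Q k = univ) (hk1 : Q (k + 1) = univ)
    (hD : ∀ w ∈ D, ∀ i ≤ k, (Even i ↔ w ∈ X) → w ∉ S i)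
    {u v : V} (huv : u ∈ X ↔ v ∉ X) (hv : v ∈ D)
    (h : v ∈ S (activationTime X Q u - 1) ∪ Q (activationTime X Q u - 1)) :
    activationTime X Q v < activationTime X Q u := by
  have hpos := activationTime_pos X hQ0 hk hk1 u
  have hle := activationTime_le_succ X hk hk1 u
  have hpar : Even (activationTime X Q u - 1) ↔ v ∈ X := by
    have := (activationTime_spec X hk hk1 u).1
    rw [← Nat.sub_add_cancel hpos, Nat.even_add_one] at this
    tauto
  have hvQ : v ∈ Q (activationTime X Q u - 1) :=
    (mem_union.mp h).resolve_left (hD v hv _ (by omega) hpar)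
  have := activationTime_le hpar hvQ
  omega

end ActivationTime

section TimedTargetSet

variable [Fintype V] {G : SimpleGraph V} {τ : V → ℕ} {S : ℕ → Finset V} {k : ℕ}

theorem mem_Qseq_succ {v : V} {i : ℕ} :
    v ∈ Qseq G τ S (i + 1) ↔ τ v ≤ #(G.neighborFinset v ∩ (S i ∪ Qseq G τ S i)) := by
  simp [Qseq]

theorem card_neighborFinset_sdiff_le {v : V} {i : ℕ} (hv : v ∈ Qseq G τ S (i + 1)) :
    #(G.neighborFinset v \ (S i ∪ Qseq G τ S i)) ≤ G.degree v - τ v := by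
  have := card_sdiff_add_card_inter (G.neighborFinset v) (S i ∪ Qseq G τ S i)
  rw [G.card_neighborFinset_eq_degree] at this
  have := mem_Qseq_succ.mp hv
  omega

theorem IsTTS.threshold_le_degree (hS : IsTTS G τ S k) (v : V) : τ v ≤ G.degree v := by
  obtain ⟨-, hQk⟩ := hS
  cases k with
  | zero => exact absurd (hQk ▸ mem_univ v) (by simp [Qseq])
  | succ k =>
    have hv := mem_Qseq_succ.mp (hQk ▸ mem_univ v)
    exact hv.trans <| (card_le_card inter_subset_left).trans_eq (G.card_neighborFinset_eq_degree v)

theorem IsTTS.Qseq_succ_eq_univ (hS : IsTTS G τ S k) : Qseq G τ S (k + 1) = univ := by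
  ext v
  simp only [mem_Qseq_succ, hS.1, hS.2, empty_union, inter_univ, mem_univ, iff_true]
  exact hS.threshold_le_degree v

end TimedTargetSet

theorem stmt3_general [Fintype V] (G : SimpleGraph V) (X Y : Finset V)
    (hpart : ∀ v, v ∈ X ↔ v ∉ Y)
    (hbip : ∀ a b, G.Adj a b → (a ∈ X ↔ b ∈ Y))
    (τ : V → ℕ)
    (S : ℕ → Finset V) (k : ℕ) (hS : IsTTS G τ S k)
    (D : Finset V)
    (hDX : D ∩ (((Finset.range (k + 1)).filter fun i => Even i).biUnion S) ∩ X = ∅)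
    (hDY : D ∩ (((Finset.range (k + 1)).filter fun i => Odd i).biUnion S) ∩ Y = ∅) :
    (G.edgeFinset.filter fun e => ∀ x ∈ e, x ∈ D).card ≤ ∑ u ∈ D, (G.degree u - τ u) := by
  set Q := Qseq G τ S
  set t := activationTime X Q
  have hQ0 : Q 0 = ∅ := rfl
  have hk : Q k = univ := hS.2
  have hk1 : Q (k + 1) = univ := hS.Qseq_succ_eq_univ
  have hD : ∀ w ∈ D, ∀ i ≤ k, (Even i ↔ w ∈ X) → w ∉ S i := by
    intro w hw i hik hpar
    by_cases hwX : w ∈ X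
    · exact notMem_of_inter_biUnion_inter_eq_empty hDX hw hwX hik (hpar.mpr hwX)
    · exact notMem_of_inter_biUnion_inter_eq_empty hDY hw ((iff_not_comm.mp (hpart w)).mpr hwX)
        hik (Nat.not_even_iff_odd.mp (hwX ∘ hpar.mp))
  have hflip : ∀ u v, G.Adj u v → (u ∈ X ↔ v ∉ X) := fun u v h => by
    rw [hbip u v h, hpart v]; tauto
  refine (card_filter_edgeFinset_le_sum_card G D
    (fun u => G.neighborFinset u \ (S (t u - 1) ∪ Q (t u - 1))) ?_).trans
    (sum_le_sum fun u _ => card_neighborFinset_sdiff_le ?_)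
  · intro u hu v hv hadj
    by_contra! h
    simp only [mem_sdiff, SimpleGraph.mem_neighborFinset, hadj, hadj.symm, true_and,
      not_not] at h
    have := activationTime_lt_of_mem hQ0 hk hk1 hD (hflip u v hadj) hv h.1
    have := activationTime_lt_of_mem hQ0 hk hk1 hD (hflip v u hadj.symm) hu h.2
    omega
  · rw [Nat.sub_add_cancel (activationTime_pos X hQ0 hk hk1 u)]
    exact (activationTime_spec X hk hk1 u).2

/-- Lemma 2: Let `G` be bipartite with parts `X`, `Y`, `τ` a threshold
assignment, `S_0, …, S_k` a timed target set, `S_e = S_0 ∪ S_2 ∪ …`, `S_o = S_1 ∪ S_3 ∪ …`.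
If `D ⊆ V` satisfies `D ∩ S_e ∩ X = ∅` and `D ∩ S_o ∩ Y = ∅`, then the number of edges of
the induced subgraph `G[D]` is at most `Σ_{u∈D} (d(u) − τ(u))`. -/
theorem stmt3 [Fintype V] (G : SimpleGraph V) (X Y : Finset V)
    (hpart : ∀ v, v ∈ X ↔ v ∉ Y)
    (hbip : ∀ a b, G.Adj a b → (a ∈ X ↔ b ∈ Y))
    (τ : V → ℕ) (hτ : ∀ v, τ v ≤ G.degree v)
    (S : ℕ → Finset V) (k : ℕ) (hS : IsTTS G τ S k)
    (D : Finset V)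
    (hDX : D ∩ (((Finset.range (k + 1)).filter fun i => Even i).biUnion S) ∩ X = ∅)
    (hDY : D ∩ (((Finset.range (k + 1)).filter fun i => Odd i).biUnion S) ∩ Y = ∅) :
    (G.edgeFinset.filter fun e => ∀ x ∈ e, x ∈ D).card ≤ ∑ u ∈ D, (G.degree u - τ u) :=
  stmt3_general G X Y hpart hbip τ S k hS D hDX hDY
end

section
/- If G is a bipartite graph on n nodes with maximum degree Δ and τ is the strict majority threshold, then every timed target set in the non-progressive threshold model has size at least 2n/(Δ+1). -/
open Finset
open scoped Classical

variable {V : Type*}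

/-!
Colour the bipartite graph by `c : V → ZMod 2`. Whether `v` is active at time `i + 1` depends
only on neighbours `u` seeded or active at time `i`, and these satisfy `c u + i = c v + (i + 1)`.
So the seeds split into two classes by the parity of `c v + i`, and each class alone activates,
in the progressive process, every vertex `v` active at time `k` or `k + 1` with matching parity,
that is, every vertex. Under strict-majority thresholds a progressive step never increases
`|A|` plus the number of edges leaving `A`, so each class has size at least `n / (Δ + 1)`.
-/

section Spread

variable [Fintype V] (G : SimpleGraph V)

noncomputable def progStep (τ : V → ℕ) (A : Finset V) : Finset V := A ∪ npStep G τ A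

noncomputable def edgeBoundary (A : Finset V) : ℕ := ∑ v ∈ A, #(G.neighborFinset v \ A)

lemma sum_card_neighborFinset_inter_comm (A C : Finset V) :
    ∑ v ∈ A, #(G.neighborFinset v ∩ C) = ∑ u ∈ C, #(G.neighborFinset u ∩ A) := by
  have h : ∀ v (D : Finset V), G.neighborFinset v ∩ D = D.bipartiteAbove G.Adj v := by
    intro v D; ext u; simp [and_comm]
  simp_rw [h]
  rw [sum_card_bipartiteAbove_eq_sum_card_bipartiteBelow]
  refine sum_congr rfl fun u _ => congrArg card (filter_congr fun v _ => G.adj_comm v u)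

lemma edgeBoundary_union_add_card_le {A C : Finset V} (hAC : Disjoint A C)
    (hC : ∀ u ∈ C, #(G.neighborFinset u \ A) < #(G.neighborFinset u ∩ A)) :
    edgeBoundary G (A ∪ C) + #(A ∪ C) ≤ edgeBoundary G A + #A := by
  have hsplit : ∀ v, #(G.neighborFinset v \ (A ∪ C)) + #(G.neighborFinset v ∩ C)
      = #(G.neighborFinset v \ A) := by
    intro v
    rw [← card_sdiff_add_card_inter (G.neighborFinset v \ A) C, sdiff_sdiff_left]
    congr 2
    ext u
    simp only [mem_inter, mem_sdiff]
    exact ⟨fun h => ⟨⟨h.1, disjoint_right.mp hAC h.2⟩, h.2⟩, fun h => ⟨h.1.1, h.2⟩⟩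
  have hnew : ∑ u ∈ C, (#(G.neighborFinset u \ (A ∪ C)) + 1)
      ≤ ∑ u ∈ C, #(G.neighborFinset u ∩ A) := by
    refine sum_le_sum fun u hu => ?_
    have := card_le_card (sdiff_subset_sdiff_right (G.neighborFinset u)
      (subset_union_left (s₁ := A) (s₂ := C)))
    exact (hC u hu).trans_le' (by omega)
  rw [sum_add_distrib, ← card_eq_sum_ones, ← sum_card_neighborFinset_inter_comm] at hnew
  have hA : edgeBoundary G A = ∑ v ∈ A, #(G.neighborFinset v \ (A ∪ C))
      + ∑ v ∈ A, #(G.neighborFinset v ∩ C) := by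
    simp only [edgeBoundary, ← hsplit, sum_add_distrib]
  rw [edgeBoundary, sum_union hAC, card_union_of_disjoint hAC, hA]
  omega

lemma edgeBoundary_progStep_add_card_le {τ : V → ℕ} (hτ : ∀ v, G.degree v + 1 ≤ 2 * τ v)
    (A : Finset V) :
    edgeBoundary G (progStep G τ A) + #(progStep G τ A) ≤ edgeBoundary G A + #A := by
  have hC : ∀ u ∈ npStep G τ A \ A,
      #(G.neighborFinset u \ A) < #(G.neighborFinset u ∩ A) := by
    intro u hu
    have hτu : τ u ≤ #(G.neighborFinset u ∩ A) := (mem_filter.mp (mem_sdiff.mp hu).1).2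
    have hdeg := card_sdiff_add_card_inter (G.neighborFinset u) A
    rw [G.card_neighborFinset_eq_degree] at hdeg
    have := hτ u
    omega
  simpa only [progStep, union_sdiff_self_eq_union] using
    edgeBoundary_union_add_card_le G disjoint_sdiff hC

lemma edgeBoundary_iterate_progStep_add_card_le {τ : V → ℕ}
    (hτ : ∀ v, G.degree v + 1 ≤ 2 * τ v) (A : Finset V) (i : ℕ) :
    edgeBoundary G ((progStep G τ)^[i] A) + #((progStep G τ)^[i] A)
      ≤ edgeBoundary G A + #A := by
  induction i with
  | zero => rfl
  | succ i ih =>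
    rw [Function.iterate_succ_apply']
    exact (edgeBoundary_progStep_add_card_le G hτ _).trans ih

lemma monotone_iterate_progStep (τ : V → ℕ) (A : Finset V) :
    Monotone fun i => (progStep G τ)^[i] A :=
  monotone_nat_of_le_succ fun i => by
    simp only [Function.iterate_succ_apply', progStep, subset_union_left]

lemma edgeBoundary_le_card_mul_maxDegree (A : Finset V) :
    edgeBoundary G A ≤ #A * G.maxDegree :=
  sum_le_card_nsmul A _ _ fun v _ => (card_le_card sdiff_subset).trans <|
    (G.card_neighborFinset_eq_degree v).trans_le (G.degree_le_maxDegree v)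

lemma card_le_card_mul_of_iterate_progStep_eq_univ {τ : V → ℕ}
    (hτ : ∀ v, G.degree v + 1 ≤ 2 * τ v) {A : Finset V} {i : ℕ}
    (h : (progStep G τ)^[i] A = univ) :
    Fintype.card V ≤ #A * (G.maxDegree + 1) := by
  have hpot := edgeBoundary_iterate_progStep_add_card_le G hτ A i
  rw [h, card_univ] at hpot
  have := edgeBoundary_le_card_mul_maxDegree G A
  rw [mul_add_one]
  omega

end Spread

noncomputable def paritySeeds (S : ℕ → Finset V) (n : ℕ) (c : V → ZMod 2) (ε : ZMod 2) :
    Finset V :=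
  (range n).biUnion fun i => {v ∈ S i | c v + i = ε}

lemma sum_card_paritySeeds_le (S : ℕ → Finset V) (n : ℕ) (c : V → ZMod 2) :
    ∑ ε : ZMod 2, #(paritySeeds S n c ε) ≤ ∑ i ∈ range n, #(S i) :=
  calc ∑ ε : ZMod 2, #(paritySeeds S n c ε)
      ≤ ∑ ε : ZMod 2, ∑ i ∈ range n, #{v ∈ S i | c v + i = ε} :=
        sum_le_sum fun ε _ => card_biUnion_le
    _ = ∑ i ∈ range n, #(S i) := by
        rw [sum_comm]
        exact sum_congr rfl fun i _ =>
          (card_eq_sum_card_fiberwise fun v _ => mem_univ (c v + i)).symm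

section Parity

variable [Fintype V] {G : SimpleGraph V} {τ : V → ℕ} {S : ℕ → Finset V}

lemma Qseq_succ_eq_univ_of_isTTS {k : ℕ} (hS : IsTTS G τ S k) : Qseq G τ S (k + 1) = univ := by
  refine eq_univ_of_forall fun v => mem_filter.mpr ⟨mem_univ v, ?_⟩
  have hv : v ∈ Qseq G τ S k := hS.2 ▸ mem_univ v
  rw [hS.1, hS.2, empty_union, inter_univ]
  cases k with
  | zero => simp [Qseq] at hv
  | succ k => exact (mem_filter.mp hv).2.trans (card_le_card inter_subset_left)

lemma mem_iterate_progStep_paritySeeds {c : V → ZMod 2}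
    (hc : ∀ u v, G.Adj u v → c u = c v + 1) {n i : ℕ} (hi : i ≤ n) {v : V}
    (hv : v ∈ Qseq G τ S i) :
    v ∈ (progStep G τ)^[i] (paritySeeds S n c (c v + i)) := by
  induction i generalizing v with
  | zero => simp [Qseq] at hv
  | succ i ih =>
    have hsub : G.neighborFinset v ∩ (S i ∪ Qseq G τ S i)
        ⊆ G.neighborFinset v ∩ (progStep G τ)^[i] (paritySeeds S n c (c v + (i + 1 : ℕ))) := by
      intro u hu
      obtain ⟨hadj, hu⟩ := mem_inter.mp hu
      have hcu : c u + i = c v + (i + 1 : ℕ) := by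
        rw [hc u v ((G.mem_neighborFinset v u).mp hadj).symm]; push_cast; ring
      refine mem_inter.mpr ⟨hadj, hcu ▸ ?_⟩
      rcases mem_union.mp hu with hS | hQ
      · exact monotone_iterate_progStep G τ _ (Nat.zero_le i)
          (mem_biUnion.mpr ⟨i, mem_range.mpr (by omega), mem_filter.mpr ⟨hS, rfl⟩⟩)
      · exact ih (by omega) hQ
    rw [Function.iterate_succ_apply']
    exact mem_union_right _ (mem_filter.mpr ⟨mem_univ v,
      (mem_filter.mp hv).2.trans (card_le_card hsub)⟩)

lemma iterate_progStep_paritySeeds_eq_univ {c : V → ZMod 2}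
    (hc : ∀ u v, G.Adj u v → c u = c v + 1) {k : ℕ} (hS : IsTTS G τ S k) (ε : ZMod 2) :
    (progStep G τ)^[k + 1] (paritySeeds S (k + 1) c ε) = univ := by
  refine eq_univ_of_forall fun v => ?_
  set t := k + (ε - c v - (k : ZMod 2)).val
  have ht : t = k ∨ t = k + 1 := by have := ZMod.val_lt (ε - c v - (k : ZMod 2)); omega
  have hct : c v + t = ε := by simp only [t, Nat.cast_add, ZMod.natCast_zmod_val]; ring
  have hQ : v ∈ Qseq G τ S t := by
    rcases ht with h | h <;> rw [h] <;> simp [hS.2, Qseq_succ_eq_univ_of_isTTS hS]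
  have hv := mem_iterate_progStep_paritySeeds hc (n := k + 1) (by omega) hQ
  rw [hct] at hv
  exact monotone_iterate_progStep G τ _ (by omega) hv

end Parity

lemma degree_add_one_le_two_mul_strictMaj [Fintype V] (G : SimpleGraph V) (v : V) :
    G.degree v + 1 ≤ 2 * strictMaj G v := by
  unfold strictMaj; omega

/-- Theorem on bipartite graphs: If `G` is bipartite on `n` nodes with
maximum degree `Δ` and `τ` is the strict majority threshold, then every timed target set
has size at least `2n/(Δ+1)`, i.e. `2n ≤ size ⬝ (Δ+1)`. -/
theorem stmt4 [Fintype V] (G : SimpleGraph V) (X Y : Finset V)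
    (hpart : ∀ v, v ∈ X ↔ v ∉ Y)
    (hbip : ∀ a b, G.Adj a b → (a ∈ X ↔ b ∈ Y))
    (S : ℕ → Finset V) (k : ℕ) (hS : IsTTS G (strictMaj G) S k) :
    2 * Fintype.card V ≤ ttsSize S k * (G.maxDegree + 1) := by
  let c : V → ZMod 2 := fun v => if v ∈ X then 1 else 0
  have hc : ∀ u v, G.Adj u v → c u = c v + 1 := by
    intro u v huv
    have hv : v ∈ X ↔ u ∉ X := by rw [hpart v, hbip u v huv]
    by_cases hu : u ∈ X <;> simp [c, hu, hv]
    decide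
  have hcover (ε : ZMod 2) :
      Fintype.card V ≤ #(paritySeeds S (k + 1) c ε) * (G.maxDegree + 1) :=
    card_le_card_mul_of_iterate_progStep_eq_univ G (degree_add_one_le_two_mul_strictMaj G)
      (iterate_progStep_paritySeeds_eq_univ hc hS ε)
  calc 2 * Fintype.card V = ∑ _ε : ZMod 2, Fintype.card V := by simp
    _ ≤ ∑ ε : ZMod 2, #(paritySeeds S (k + 1) c ε) * (G.maxDegree + 1) :=
        sum_le_sum fun ε _ => hcover ε
    _ ≤ ttsSize S k * (G.maxDegree + 1) := by
        rw [← sum_mul]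
        exact Nat.mul_le_mul_right _ (sum_card_paritySeeds_le S (k + 1) c)
end

section
/- Let G be a graph with nodes v_1,…,v_n and threshold assignment τ, and let H be the bipartite double cover of G with parts X={x_1,…,x_n}, Y={y_1,…,y_n} and edges x_i y_j for each edge v_i v_j of G, with thresholds τ'(x_i)=τ'(y_i)=τ(v_i). Then the minimum size of a timed target set of (H,τ') equals exactly twice the minimum size of a timed target set of (G,τ). -/
open Finset
open scoped Classical

variable {V : Type*}

/-- The bipartite double cover of `G`: vertices `V × Bool`, with `(v,b)` adjacent to
`(u,c)` iff `v` and `u` are adjacent in `G` and `b ≠ c`. -/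
def doubleCover (G : SimpleGraph V) : SimpleGraph (V × Bool) where
  Adj p q := G.Adj p.1 q.1 ∧ p.2 ≠ q.2
  symm := ⟨fun p q h => ⟨h.1.symm, h.2.symm⟩⟩
  loopless := ⟨fun p h => h.2 rfl⟩

/-! A timed target set of `G` lifts to one of the double cover by seeding both copies of every
node, which doubles its size. Conversely, since neighbours in the double cover lie on opposite
sides, a timed target set of the cover splits into two timed target sets of `G`, one for each
way of alternating sides from round to round; their sizes add up to the size of the original,
so the smaller one has at most half of it. -/

theorem Nat.sInf_eq_mul_sInf {A B : Set ℕ} (c : ℕ) (hAB : ∀ m ∈ A, c * m ∈ B)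
    (hBA : ∀ n ∈ B, ∃ m ∈ A, c * m ≤ n) : sInf B = c * sInf A := by
  rcases A.eq_empty_or_nonempty with rfl | hA
  · have hB : B = ∅ := Set.eq_empty_of_forall_notMem fun n hn => (hBA n hn).elim fun _ h => h.1
    simp [hB]
  apply le_antisymm
  · exact Nat.sInf_le (hAB _ (Nat.sInf_mem hA))
  · obtain ⟨m, hm, hle⟩ := hBA _ (Nat.sInf_mem ⟨_, hAB _ hA.some_mem⟩)
    exact (Nat.mul_le_mul_left c (Nat.sInf_le hm)).trans hle

theorem Finset.card_filter_mk_false_add_true {α : Type*} [Fintype α] (A : Finset (α × Bool)) :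
    #{v | (v, false) ∈ A} + #{v | (v, true) ∈ A} = #A := by
  rw [← filter_univ_mem A, card_filter, card_filter, card_filter, Fintype.sum_prod_type,
    ← sum_add_distrib]
  simp only [Fintype.sum_bool, mem_filter, mem_univ, true_and, add_comm]

section DoubleCover

variable [Fintype V] (G : SimpleGraph V) (τ : V → ℕ)

theorem doubleCover_neighborFinset (v : V) (b : Bool) :
    (doubleCover G).neighborFinset (v, b) = G.neighborFinset v ×ˢ {!b} := by
  ext ⟨u, c⟩
  simp only [SimpleGraph.mem_neighborFinset, mem_product, mem_singleton]
  change G.Adj v u ∧ b ≠ c ↔ _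
  cases b <;> cases c <;> simp

def liftSeq (S : ℕ → Finset V) (i : ℕ) : Finset (V × Bool) := S i ×ˢ univ

noncomputable def projSeq (S' : ℕ → Finset (V × Bool)) (b : Bool) (i : ℕ) : Finset V :=
  {v | (v, b ^^ i.bodd) ∈ S' i}

theorem mem_Qseq_doubleCover_succ (S' : ℕ → Finset (V × Bool)) (i : ℕ) (v : V) (b : Bool) :
    (v, b) ∈ Qseq (doubleCover G) (fun p => τ p.1) S' (i + 1) ↔
      τ v ≤ #{u ∈ G.neighborFinset v |
        (u, !b) ∈ S' i ∪ Qseq (doubleCover G) (fun p => τ p.1) S' i} := by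
  simp only [Qseq, mem_filter, mem_univ, true_and, doubleCover_neighborFinset]
  rw [card_nbij' Prod.fst (fun u => (u, !b))]
  · rintro ⟨u, c⟩ _; simp_all
  · intro u _; simp_all
  · rintro ⟨u, c⟩ _; simp_all
  · intro u _; rfl

theorem Qseq_liftSeq (S : ℕ → Finset V) (i : ℕ) :
    Qseq (doubleCover G) (fun p => τ p.1) (liftSeq S) i = Qseq G τ S i ×ˢ univ := by
  induction i with
  | zero => simp [Qseq]
  | succ i ih =>
    ext ⟨v, b⟩
    rw [mem_Qseq_doubleCover_succ, ih, mem_product, Qseq]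
    simp only [liftSeq, mem_filter, mem_union, mem_product, mem_univ, and_true, true_and,
      ← filter_mem_eq_inter]

theorem mem_Qseq_projSeq (S' : ℕ → Finset (V × Bool)) (b : Bool) (i : ℕ) (v : V)
    (hv : (v, b ^^ i.bodd) ∈ Qseq (doubleCover G) (fun p => τ p.1) S' i) :
    v ∈ Qseq G τ (projSeq S' b) i := by
  induction i generalizing v with
  | zero => simp [Qseq] at hv
  | succ i ih =>
    have hside : (!(b ^^ (i + 1).bodd)) = (b ^^ i.bodd) := by
      rw [Nat.bodd_succ, Bool.xor_not, Bool.not_not]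
    rw [mem_Qseq_doubleCover_succ, hside] at hv
    simp only [Qseq, mem_filter, mem_univ, true_and]
    refine hv.trans (card_le_card fun u hu => ?_)
    obtain ⟨hN, hSQ⟩ := mem_filter.1 hu
    refine mem_inter.2 ⟨hN, ?_⟩
    rcases mem_union.1 hSQ with hS | hQ
    · exact mem_union_left _ (by simpa [projSeq] using hS)
    · exact mem_union_right _ (ih u hQ)

theorem IsTTS.liftSeq {S : ℕ → Finset V} {k : ℕ} (h : IsTTS G τ S k) :
    IsTTS (doubleCover G) (fun p => τ p.1) (liftSeq S) k := by
  refine ⟨by simp [_root_.liftSeq, h.1], ?_⟩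
  rw [Qseq_liftSeq, h.2, univ_product_univ]

theorem IsTTS.projSeq {S' : ℕ → Finset (V × Bool)} {k : ℕ}
    (h : IsTTS (doubleCover G) (fun p => τ p.1) S' k) (b : Bool) :
    IsTTS G τ (projSeq S' b) k := by
  refine ⟨by simp [_root_.projSeq, h.1], eq_univ_of_forall fun v => ?_⟩
  exact mem_Qseq_projSeq G τ S' b k v (h.2 ▸ mem_univ _)

omit [Fintype V] in
theorem ttsSize_liftSeq (S : ℕ → Finset V) (k : ℕ) :
    ttsSize (liftSeq S) k = 2 * ttsSize S k := by
  simp only [ttsSize, liftSeq, mul_sum, card_product, card_univ, Fintype.card_bool, mul_comm]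

theorem ttsSize_projSeq_false_add_true (S' : ℕ → Finset (V × Bool)) (k : ℕ) :
    ttsSize (projSeq S' false) k + ttsSize (projSeq S' true) k = ttsSize S' k := by
  rw [ttsSize, ttsSize, ttsSize, ← sum_add_distrib]
  refine sum_congr rfl fun i _ => ?_
  rw [← card_filter_mk_false_add_true (S' i), projSeq, projSeq]
  cases i.bodd
  · rfl
  · exact add_comm _ _

end DoubleCover

theorem stmt5_general [Fintype V] (G : SimpleGraph V) (τ : V → ℕ) :
    MTT (doubleCover G) (fun p => τ p.1) = 2 * MTT G τ := by
  refine Nat.sInf_eq_mul_sInf 2 ?_ ?_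
  · rintro _ ⟨S, k, hS, rfl⟩
    exact ⟨liftSeq S, k, hS.liftSeq G τ, ttsSize_liftSeq S k⟩
  · rintro _ ⟨S', k, hS', rfl⟩
    have hsum := ttsSize_projSeq_false_add_true S' k
    rcases le_total (ttsSize (projSeq S' false) k) (ttsSize (projSeq S' true) k) with hle | hle
    · exact ⟨_, ⟨_, k, hS'.projSeq G τ false, rfl⟩, by omega⟩
    · exact ⟨_, ⟨_, k, hS'.projSeq G τ true, rfl⟩, by omega⟩

/-- Theorem 3: For a graph `G` with threshold assignment `τ`, the bipartite
double cover `H` (with thresholds `τ'(x_i) = τ'(y_i) = τ(v_i)`) satisfies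
`MTT(H, τ') = 2 ⬝ MTT(G, τ)`. -/
theorem stmt5 [Fintype V] (G : SimpleGraph V) (τ : V → ℕ)
    (hτ : ∀ v, τ v ≤ G.degree v) :
    MTT (doubleCover G) (fun p => τ p.1) = 2 * MTT G τ :=
  stmt5_general G τ
end

section
/- For any graph G on n nodes with maximum degree Δ and strict majority thresholds, every timed target set in the non-progressive threshold model has size at least 2n/(Δ+1). -/
open Finset
open scoped Classical

variable {V : Type*}

/-!
Goles' energy argument. For node weights θ and consecutive configurations A, B put
E(A, B) = θ(A) + θ(B) - 2 e(A, B), where e(A, B) counts the adjacent pairs in A × B. Under the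
update B ↦ S ∪ {v | θ v ≤ 2 |N(v) ∩ B|}, passing from (A, B) to (B, S ∪ …) raises E by at most
θ(S): the switched-on nodes are exactly those with nonpositive gain θ v - 2 |N(v) ∩ B|, so they
minimise the total gain over all node sets. The weight θ = deg + 1 realises the strict-majority
thresholds; for it the energy is at most (Δ + 1) times the number of seeds so far, while once all
nodes are active it is at least 2n.
-/

theorem Finset.sum_le_sum_of_nonpos_of_nonneg_compl {ι M : Type*} [AddCommGroup M] [PartialOrder M]
    [IsOrderedAddMonoid M] {f : ι → M} {s : Finset ι} (t : Finset ι)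
    (hs : ∀ i ∈ s, f i ≤ 0) (hsc : ∀ i ∉ s, 0 ≤ f i) : ∑ i ∈ s, f i ≤ ∑ i ∈ t, f i := by
  rw [← sum_inter_add_sum_sdiff s t, ← sum_inter_add_sum_sdiff t s, inter_comm]
  have hst : ∑ i ∈ s \ t, f i ≤ 0 := sum_nonpos fun i hi => hs i (mem_sdiff.1 hi).1
  have hts : 0 ≤ ∑ i ∈ t \ s, f i := sum_nonneg fun i hi => hsc i (mem_sdiff.1 hi).2
  calc _ ≤ ∑ i ∈ t ∩ s, f i := add_le_of_nonpos_right hst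
    _ ≤ _ := le_add_of_nonneg_right hts

section Energy

variable [Fintype V] (G : SimpleGraph V)

noncomputable def crossCount (A B : Finset V) : ℕ := ∑ v ∈ B, #(G.neighborFinset v ∩ A)

theorem crossCount_comm (A B : Finset V) : crossCount G A B = crossCount G B A := by
  have key := sum_card_bipartiteAbove_eq_sum_card_bipartiteBelow (s := B) (t := A) (r := G.Adj)
  unfold crossCount
  convert key using 3 <;> ext <;> simp [bipartiteAbove, bipartiteBelow, and_comm, G.adj_comm]

variable (θ : V → ℕ)

noncomputable def energy (A B : Finset V) : ℤ :=
  ∑ v ∈ A, (θ v : ℤ) + ∑ v ∈ B, (θ v : ℤ) - 2 * crossCount G A B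

noncomputable def gain (A : Finset V) (v : V) : ℤ := θ v - 2 * #(G.neighborFinset v ∩ A)

noncomputable def activated (A : Finset V) : Finset V :=
  univ.filter fun v => θ v ≤ 2 * #(G.neighborFinset v ∩ A)

theorem energy_comm (A B : Finset V) : energy G θ A B = energy G θ B A := by
  rw [energy, energy, crossCount_comm]; ring

theorem energy_eq_sum_add_sum_gain (A B : Finset V) :
    energy G θ A B = ∑ v ∈ A, (θ v : ℤ) + ∑ v ∈ B, gain G θ A v := by
  simp only [energy, gain, crossCount, sum_sub_distrib, ← mul_sum]
  push_cast; ring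

theorem energy_empty_left (B : Finset V) : energy G θ ∅ B = ∑ v ∈ B, (θ v : ℤ) := by
  simp [energy, crossCount]

theorem sum_gain_activated_le (A B : Finset V) :
    ∑ v ∈ activated G θ A, gain G θ A v ≤ ∑ v ∈ B, gain G θ A v := by
  refine sum_le_sum_of_nonpos_of_nonneg_compl B (fun v hv => ?_) (fun v hv => ?_) <;>
    simp only [activated, mem_filter, mem_univ, true_and, not_le] at hv <;>
    simp only [gain] <;> omega

theorem energy_activated_le (A B S : Finset V) :
    energy G θ B (S ∪ activated G θ B) ≤ energy G θ A B + ∑ v ∈ S, (θ v : ℤ) := by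
  set Q := activated G θ B
  have hsplit :
      ∑ v ∈ S ∪ Q, gain G θ B v = ∑ v ∈ S \ Q, gain G θ B v + ∑ v ∈ Q, gain G θ B v := by
    rw [← sum_union disjoint_sdiff_self_left, sdiff_union_self_eq_union]
  have hseed : ∑ v ∈ S \ Q, gain G θ B v ≤ ∑ v ∈ S, (θ v : ℤ) :=
    calc _ ≤ ∑ v ∈ S \ Q, (θ v : ℤ) := sum_le_sum fun v _ => by simp only [gain]; omega
      _ ≤ _ := sum_le_sum_of_subset_of_nonneg sdiff_subset fun v _ _ => by positivity
  have hA := sum_gain_activated_le G θ B A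
  rw [energy_comm G θ A B, energy_eq_sum_add_sum_gain, energy_eq_sum_add_sum_gain, hsplit]
  linarith

end Energy

section TimedProcess

variable [Fintype V] (G : SimpleGraph V) (τ θ : V → ℕ) (S : ℕ → Finset V)

theorem Qseq_succ_eq_activated (hθ : ∀ v c, τ v ≤ c ↔ θ v ≤ 2 * c) (i : ℕ) :
    Qseq G τ S (i + 1) = activated G θ (S i ∪ Qseq G τ S i) := by
  ext v
  simp [Qseq, activated, hθ]

theorem energy_Qseq_le (hθ : ∀ v c, τ v ≤ c ↔ θ v ≤ 2 * c) (i : ℕ) :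
    energy G θ (S i ∪ Qseq G τ S i) (S (i + 1) ∪ Qseq G τ S (i + 1)) ≤
      ∑ l ∈ range (i + 2), ∑ v ∈ S l, (θ v : ℤ) := by
  induction i with
  | zero =>
    have h0 := energy_activated_le G θ ∅ (S 0) (S 1)
    rw [Qseq_succ_eq_activated G τ θ S hθ]
    simpa [Qseq, energy_empty_left, sum_range_succ] using h0
  | succ i ih =>
    rw [Qseq_succ_eq_activated G τ θ S hθ (i + 1), sum_range_succ]
    linarith [energy_activated_le G θ (S i ∪ Qseq G τ S i) (S (i + 1) ∪ Qseq G τ S (i + 1))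
      (S (i + 2))]

end TimedProcess

section StrictMajority

variable [Fintype V] (G : SimpleGraph V)

theorem strictMaj_le_iff (v : V) (c : ℕ) : strictMaj G v ≤ c ↔ G.degree v + 1 ≤ 2 * c := by
  unfold strictMaj
  omega

theorem one_le_degree_of_mem_activated {A : Finset V} {v : V}
    (hv : v ∈ activated G (fun v => G.degree v + 1) A) : 1 ≤ G.degree v := by
  have hN : #(G.neighborFinset v ∩ A) ≤ G.degree v :=
    G.card_neighborFinset_eq_degree v ▸ card_le_card inter_subset_left
  simp only [activated, mem_filter, mem_univ, true_and] at hv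
  omega

theorem two_mul_card_le_energy_univ (hdeg : ∀ v, 1 ≤ G.degree v) (B : Finset V) :
    2 * (Fintype.card V : ℤ) ≤ energy G (fun v => G.degree v + 1) B univ := by
  set θ : V → ℕ := fun v => G.degree v + 1
  have hgain (v : V) : gain G θ univ v = 1 - G.degree v := by
    simp only [θ, gain, inter_univ, G.card_neighborFinset_eq_degree]
    push_cast
    ring
  have htotal : ∑ v, ((θ v : ℤ) + gain G θ univ v) = 2 * Fintype.card V := by
    rw [← card_univ, mul_comm, ← nsmul_eq_mul, ← sum_const]
    refine sum_congr rfl fun v _ => ?_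
    simp only [hgain, θ]
    push_cast
    ring
  have hB : ∑ v, gain G θ univ v ≤ ∑ v ∈ B, gain G θ univ v :=
    sum_le_sum_of_nonpos_of_nonneg_compl B
      (fun v _ => by have := hdeg v; rw [hgain]; omega) fun v hv => absurd (mem_univ v) hv
  rw [energy_comm, energy_eq_sum_add_sum_gain, ← htotal, sum_add_distrib]
  exact add_le_add_right hB _

theorem sum_degree_add_one_le (s : Finset V) :
    ∑ v ∈ s, (G.degree v + 1) ≤ #s * (G.maxDegree + 1) := by
  simpa using sum_le_card_nsmul s _ _ fun v _ => Nat.add_le_add_right (G.degree_le_maxDegree v) 1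

end StrictMajority

/-- Theorem 4: For any graph `G` on `n` nodes with maximum degree `Δ` and
strict majority thresholds, every timed target set has size at least `2n/(Δ+1)`,
i.e. `2n ≤ size ⬝ (Δ+1)`. -/
theorem stmt6 [Fintype V] (G : SimpleGraph V)
    (S : ℕ → Finset V) (k : ℕ) (hS : IsTTS G (strictMaj G) S k) :
    2 * Fintype.card V ≤ ttsSize S k * (G.maxDegree + 1) := by
  obtain ⟨-, hQk⟩ := hS
  cases k with
  | zero =>
    have : IsEmpty V := univ_eq_empty_iff.mp hQk.symm
    simp
  | succ j =>
    set θ : V → ℕ := fun v => G.degree v + 1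
    set X := S j ∪ Qseq G (strictMaj G) S j
    have hθ := strictMaj_le_iff G
    have hact : activated G θ X = univ := (Qseq_succ_eq_activated G _ θ S hθ j).symm.trans hQk
    have hdeg (v : V) : 1 ≤ G.degree v := one_le_degree_of_mem_activated G (hact ▸ mem_univ v)
    have henergy := energy_Qseq_le G _ θ S hθ j
    rw [hQk, union_eq_right.2 (subset_univ _)] at henergy
    have hcost : ∑ l ∈ range (j + 2), ∑ v ∈ S l, θ v ≤ ttsSize S (j + 1) * (G.maxDegree + 1) := by
      rw [ttsSize, sum_mul]
      exact sum_le_sum fun l _ => sum_degree_add_one_le G (S l)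
    zify at hcost
    exact_mod_cast ((two_mul_card_le_energy_univ G hdeg X).trans henergy).trans hcost
end

section
/- In the 'tower' graph G_κ consisting of levels L_1,…,L_κ with |L_i|=i, complete bipartite connections between consecutive levels, and two leaves attached to the single node of L_1, with strict majority thresholds, every ordinary target set S in the non-progressive model satisfies |(L_{i-1}∪L_{i+1})∩S| ≥ i+1 for every 2≤i≤κ−1. -/
/-! If at most `i` neighbours of `L_i` start positive, all of `L_i` (threshold `i + 1`) is
negative after one step. Under strict majority a node with at least half of its neighbours
negative becomes negative, so a negative level `L_j` makes `L_{j-1}` negative at the next step,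
and two negative leaves make `L_1` negative because `|L_2| = |L_0|`. Hence from time `1` on
some whole level is always negative. As the all-positive configuration is a fixed point, it
would have to occur at some positive time, which is impossible. -/

open Finset
open scoped Classical

variable {V : Type*}

/-- Vertex type of the tower graph: levels `L_1, …, L_κ` with `|L_i| = i`
(a pair `⟨i, j⟩` with `i : Fin κ` encodes the `j`-th node of level `L_{i+1}`),
plus two extra leaf nodes. -/
def towerV (κ : ℕ) : Type := (Σ i : Fin κ, Fin (i + 1)) ⊕ Fin 2

instance (κ : ℕ) : Fintype (towerV κ) := by unfold towerV; infer_instance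

/-- The level of a vertex: level nodes of `L_i` have level `i ∈ {1, …, κ}`, and the two
leaves have level `0`. -/
def lev {κ : ℕ} : towerV κ → ℕ
  | Sum.inl x => (x.1 : ℕ) + 1
  | Sum.inr _ => 0

/-- The tower graph `G_κ`: each node of `L_i` is adjacent to every node of `L_{i+1}`,
and the two leaves (level `0`) are adjacent exactly to the unique node of `L_1`. -/
def towerGraph (κ : ℕ) : SimpleGraph (towerV κ) where
  Adj a b := lev a + 1 = lev b ∨ lev b + 1 = lev a
  symm := ⟨fun a b h => h.symm⟩
  loopless := ⟨by
    intro a h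
    rcases h with h | h <;> omega⟩

/-- The set `L_i` of nodes of level `i` (for `i = 0` this is the pair of leaves). -/
noncomputable def levelSet (κ : ℕ) (i : ℕ) : Finset (towerV κ) :=
  Finset.univ.filter fun v => lev v = i

section StrictMajority

variable [Fintype V] (G : SimpleGraph V)

theorem mem_npStep_strictMaj_iff {A : Finset V} {v : V} :
    v ∈ npStep G (strictMaj G) A ↔ G.degree v < 2 * #(G.neighborFinset v ∩ A) := by
  rw [npStep, mem_filter, strictMaj]
  simp only [mem_univ, true_and]
  omega

theorem notMem_npStep_strictMaj {A B : Finset V} {v : V} (hBA : Disjoint B A)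
    (hB : #(G.neighborFinset v \ B) ≤ #(G.neighborFinset v ∩ B)) :
    v ∉ npStep G (strictMaj G) A := by
  have hlive : G.neighborFinset v ∩ A ⊆ G.neighborFinset v \ B := fun x hx =>
    mem_sdiff.mpr ⟨(mem_inter.mp hx).1, disjoint_right.mp hBA (mem_inter.mp hx).2⟩
  have hsplit := card_sdiff_add_card_inter (G.neighborFinset v) B
  rw [G.card_neighborFinset_eq_degree] at hsplit
  rw [mem_npStep_strictMaj_iff]
  have := card_le_card hlive
  omega

theorem npStep_strictMaj_univ (h : ∀ v, 0 < G.degree v) :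
    npStep G (strictMaj G) univ = univ := by
  refine eq_univ_of_forall fun v => ?_
  rw [mem_npStep_strictMaj_iff, inter_univ, G.card_neighborFinset_eq_degree]
  linarith [h v]

end StrictMajority

section Tower

variable {κ j : ℕ}

theorem mem_levelSet {v : towerV κ} : v ∈ levelSet κ j ↔ lev v = j := by
  simp [levelSet]

theorem lev_le (v : towerV κ) : lev v ≤ κ := by
  cases v with
  | inl x => exact x.1.isLt
  | inr _ => exact Nat.zero_le κ

theorem towerGraph_mem_neighborFinset {a b : towerV κ} :
    b ∈ (towerGraph κ).neighborFinset a ↔ lev a + 1 = lev b ∨ lev b + 1 = lev a :=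
  SimpleGraph.mem_neighborFinset _ _ _

theorem card_levelSet_zero : #(levelSet κ 0) = 2 := by
  apply card_eq_of_bijective fun m hm => Sum.inr ⟨m, hm⟩
  · intro v hv
    have hv : lev (κ := κ) v = 0 := mem_levelSet.mp hv
    rcases v with _ | ⟨b, hb⟩
    · simp [lev] at hv
    · exact ⟨b, hb, rfl⟩
  · intro m hm
    exact mem_levelSet.mpr rfl
  · intro m n _ _ hmn
    simpa using hmn

theorem card_levelSet_of_pos (h0 : 0 < j) (hj : j ≤ κ) : #(levelSet κ j) = j := by
  apply card_eq_of_bijective fun m hm => Sum.inl ⟨⟨j - 1, by omega⟩, ⟨m, by simp only; omega⟩⟩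
  · intro v hv
    have hv : lev (κ := κ) v = j := mem_levelSet.mp hv
    rcases v with ⟨⟨a, ha⟩, ⟨b, hb⟩⟩ | _
    · simp only [lev] at hv hb
      obtain rfl : a = j - 1 := by omega
      exact ⟨b, by omega, rfl⟩
    · simp only [lev] at hv
      omega
  · intro m hm
    refine mem_levelSet.mpr ?_
    simp only [lev]
    omega
  · intro m n _ _ hmn
    simpa using hmn

theorem card_levelSet_le_add_two (hj : j + 2 ≤ κ) : #(levelSet κ j) ≤ #(levelSet κ (j + 2)) := by
  rw [card_levelSet_of_pos (by omega) hj]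
  rcases Nat.eq_zero_or_pos j with rfl | h0
  · rw [card_levelSet_zero]
  · rw [card_levelSet_of_pos h0 (by omega)]
    omega

theorem levelSet_nonempty (hj : j ≤ κ) : (levelSet κ j).Nonempty := by
  rw [← card_pos]
  rcases Nat.eq_zero_or_pos j with rfl | h0
  · rw [card_levelSet_zero]; omega
  · rwa [card_levelSet_of_pos h0 hj]

theorem towerGraph_degree_pos (hκ : 1 ≤ κ) (v : towerV κ) : 0 < (towerGraph κ).degree v := by
  rw [SimpleGraph.degree_pos_iff_exists_adj]
  rcases Nat.eq_zero_or_pos (lev v) with h0 | h0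
  · obtain ⟨w, hw⟩ := levelSet_nonempty hκ
    exact ⟨w, Or.inl (by rw [h0, (mem_levelSet.mp hw)])⟩
  · obtain ⟨w, hw⟩ := levelSet_nonempty (κ := κ) (j := lev v - 1) (by have := lev_le v; omega)
    exact ⟨w, Or.inr (by rw [mem_levelSet.mp hw]; omega)⟩

theorem disjoint_levelSet_npStep_of_succ {A : Finset (towerV κ)} (hj : j + 1 ≤ κ)
    (hA : Disjoint (levelSet κ (j + 1)) A) :
    Disjoint (levelSet κ j) (npStep (towerGraph κ) (strictMaj (towerGraph κ)) A) := by
  refine disjoint_left.mpr fun v hv => notMem_npStep_strictMaj _ hA ?_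
  rw [mem_levelSet] at hv
  have hup : (towerGraph κ).neighborFinset v ∩ levelSet κ (j + 1) = levelSet κ (j + 1) := by
    ext x
    simp only [mem_inter, towerGraph_mem_neighborFinset, mem_levelSet]
    omega
  rw [hup]
  rcases Nat.eq_zero_or_pos j with rfl | h0
  · have hN : (towerGraph κ).neighborFinset v ⊆ levelSet κ 1 := fun x hx => by
      rw [towerGraph_mem_neighborFinset, hv] at hx
      rw [mem_levelSet]
      omega
    simp [sdiff_eq_empty_iff_subset.mpr hN]
  · calc #((towerGraph κ).neighborFinset v \ levelSet κ (j + 1))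
        ≤ #(levelSet κ (j - 1)) := card_le_card fun x hx => by
          simp only [mem_sdiff, towerGraph_mem_neighborFinset, mem_levelSet] at hx ⊢
          omega
      _ ≤ #(levelSet κ (j + 1)) := by
          simpa [show j - 1 + 2 = j + 1 by omega] using
            card_levelSet_le_add_two (κ := κ) (j := j - 1) (by omega)

theorem disjoint_levelSet_one_npStep (hκ : 2 ≤ κ) {A : Finset (towerV κ)}
    (hA : Disjoint (levelSet κ 0) A) :
    Disjoint (levelSet κ 1) (npStep (towerGraph κ) (strictMaj (towerGraph κ)) A) := by
  refine disjoint_left.mpr fun v hv => notMem_npStep_strictMaj _ hA ?_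
  rw [mem_levelSet] at hv
  have hdown : (towerGraph κ).neighborFinset v ∩ levelSet κ 0 = levelSet κ 0 := by
    ext x
    simp only [mem_inter, towerGraph_mem_neighborFinset, mem_levelSet]
    omega
  have hup : (towerGraph κ).neighborFinset v \ levelSet κ 0 = levelSet κ 2 := by
    ext x
    simp only [mem_sdiff, towerGraph_mem_neighborFinset, mem_levelSet]
    omega
  rw [hdown, hup, card_levelSet_zero, card_levelSet_of_pos (by omega) hκ]

def MissesLevel (A : Finset (towerV κ)) : Prop :=
  ∃ j ≤ κ, Disjoint (levelSet κ j) A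

theorem MissesLevel.ne_univ {A : Finset (towerV κ)} (h : MissesLevel A) : A ≠ univ := by
  rintro rfl
  obtain ⟨j, hj, hdisj⟩ := h
  obtain ⟨w, hw⟩ := levelSet_nonempty hj
  exact disjoint_left.mp hdisj hw (mem_univ w)

theorem MissesLevel.step (hκ : 2 ≤ κ) {A : Finset (towerV κ)} (h : MissesLevel A) :
    MissesLevel (npStep (towerGraph κ) (strictMaj (towerGraph κ)) A) := by
  obtain ⟨j, hj, hdisj⟩ := h
  cases j with
  | zero => exact ⟨1, by omega, disjoint_levelSet_one_npStep hκ hdisj⟩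
  | succ j => exact ⟨j, by omega, disjoint_levelSet_npStep_of_succ hj hdisj⟩

theorem MissesLevel.iterate (hκ : 2 ≤ κ) {A : Finset (towerV κ)} (h : MissesLevel A) (n : ℕ) :
    MissesLevel ((npStep (towerGraph κ) (strictMaj (towerGraph κ)))^[n] A) := by
  induction n with
  | zero => exact h
  | succ n ih =>
    rw [Function.iterate_succ_apply']
    exact ih.step hκ

theorem towerGraph_neighborFinset_of_pos {v : towerV κ} (hv : 0 < lev v) :
    (towerGraph κ).neighborFinset v = levelSet κ (lev v - 1) ∪ levelSet κ (lev v + 1) := by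
  ext x
  simp only [towerGraph_mem_neighborFinset, mem_union, mem_levelSet]
  omega

theorem disjoint_levelSet_npStep_of_card_le {i : ℕ} (hi2 : 2 ≤ i) (hiκ : i + 1 ≤ κ)
    {S : Finset (towerV κ)} (hS : #((levelSet κ (i - 1) ∪ levelSet κ (i + 1)) ∩ S) ≤ i) :
    Disjoint (levelSet κ i) (npStep (towerGraph κ) (strictMaj (towerGraph κ)) S) := by
  refine disjoint_left.mpr fun v hv hvS => ?_
  rw [mem_levelSet] at hv
  have hN := towerGraph_neighborFinset_of_pos (v := v) (by omega)
  have hdeg : (towerGraph κ).degree v = 2 * i := by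
    rw [← SimpleGraph.card_neighborFinset_eq_degree, hN, hv,
      card_union_of_disjoint (disjoint_left.mpr fun x h1 h2 => by
        rw [mem_levelSet] at h1 h2; omega),
      card_levelSet_of_pos (by omega) (by omega), card_levelSet_of_pos (by omega) hiκ]
    omega
  rw [mem_npStep_strictMaj_iff, hdeg, hN, hv] at hvS
  omega

end Tower

theorem stmt9_general (κ : ℕ) (S : Finset (towerV κ))
    (hS : IsTS (towerGraph κ) (strictMaj (towerGraph κ)) S)
    (i : ℕ) (hi2 : 2 ≤ i) (hiκ : i ≤ κ - 1) :
    i + 1 ≤ ((levelSet κ (i - 1) ∪ levelSet κ (i + 1)) ∩ S).card := by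
  by_contra! hcard
  obtain ⟨T, hT⟩ := hS
  have hdead : MissesLevel (npStep (towerGraph κ) (strictMaj (towerGraph κ)) S) :=
    ⟨i, by omega, disjoint_levelSet_npStep_of_card_le hi2 (by omega) (by omega)⟩
  refine (hdead.iterate (by omega) T).ne_univ ?_
  rw [← Function.iterate_succ_apply, Function.iterate_succ_apply', hT,
    npStep_strictMaj_univ _ (towerGraph_degree_pos (by omega))]

/-- In the tower graph `G_κ` (`κ ≥ 4`) with strict majority thresholds,
every ordinary target set `S` in the non-progressive model satisfies
`|(L_{i−1} ∪ L_{i+1}) ∩ S| ≥ i + 1` for every `2 ≤ i ≤ κ − 1`. -/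
theorem stmt9 (κ : ℕ) (hκ : 4 ≤ κ) (S : Finset (towerV κ))
    (hS : IsTS (towerGraph κ) (strictMaj (towerGraph κ)) S)
    (i : ℕ) (hi2 : 2 ≤ i) (hiκ : i ≤ κ - 1) :
    i + 1 ≤ ((levelSet κ (i - 1) ∪ levelSet κ (i + 1)) ∩ S).card :=
  stmt9_general κ S hS i hi2 hiκ
end

section
/- The greedy algorithm (Algorithm 1) applied to any pair (G,τ) produces sets S_0, S_1 such that the sequence S_0, S_1, ∅ is a timed target set; i.e., starting with S_0 positive, every node not selected becomes positive in one step, and together with S_1 the entire graph is positive after two steps. -/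
open Finset
open scoped Classical

variable {V : Type*}

/-- The state maintained by the greedy algorithm: the sets `S₀`, `S₁` built so far, the
counters `unselected[u]` of processed unselected neighbors, and the (mutable) threshold
function. -/
structure GreedyState (V : Type*) where
  S0 : Finset V
  S1 : Finset V
  uns : V → ℕ
  thr : V → ℕ

/-- The set of blocked neighbors of `v`: neighbors `u` with
`unselected[u] = d(u) − τ(u)`. -/
noncomputable def blockedSet (G : SimpleGraph V) [Fintype V] (st : GreedyState V)
    (v : V) : Finset V :=
  (G.neighborFinset v).filter fun u => st.uns u = G.degree u - st.thr u

/-- Processing one node `v` in the greedy algorithm (Algorithm 1): if no neighbor is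
blocked, `v` is set unselected; if more than one neighbor is blocked, `v` is added to
`S₀`; if exactly one neighbor `w` is blocked, then if `d(w) > d(v)` the node `v` is set
unselected, `w` is added to `S₁` and `τ(w)` is set to `0`, and otherwise `v` is added
to `S₀`. -/
noncomputable def greedyStep (G : SimpleGraph V) [Fintype V] (st : GreedyState V)
    (v : V) : GreedyState V :=
  let B := blockedSet G st v
  if B.card = 0 then
    { st with uns := fun u => if G.Adj v u then st.uns u + 1 else st.uns u }
  else if 1 < B.card then
    { st with S0 := insert v st.S0 }
  else if ∃ w ∈ B, G.degree v < G.degree w then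
    { st with
      S1 := st.S1 ∪ B
      uns := fun u => if G.Adj v u then st.uns u + 1 else st.uns u
      thr := fun u => if u ∈ B then 0 else st.thr u }
  else
    { st with S0 := insert v st.S0 }

/-- Running the greedy algorithm on the list of nodes `l` (to be taken sorted in ascending
order of degree), starting from empty sets, zero counters and thresholds `τ`. -/
noncomputable def greedyRun (G : SimpleGraph V) [Fintype V] (τ : V → ℕ)
    (l : List V) : GreedyState V :=
  l.foldl (greedyStep G) ⟨∅, ∅, fun _ => 0, τ⟩

/-!
Throughout the run, every neighbour of a node `u` is either still unprocessed, already in `S₀`,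
or counted in `unselected[u]`; and a node outside `S₁` is only ever counted by a neighbour that
found it unblocked, so its counter stays at most `d(u) − τ(u)`. When the run is over, a node
`u ∉ S₁` therefore has at least `τ(u)` neighbours in `S₀`: all of `V ∖ S₁` lies in `Q₁`, hence
`S₁ ∪ Q₁ = V` and `Q₂ = V` because `τ ≤ d`.
-/

lemma SimpleGraph.card_neighborFinset_inter_le_erase (G : SimpleGraph V) [Fintype V]
    (A : Finset V) (v u : V) :
    #(G.neighborFinset u ∩ A) ≤
      #(G.neighborFinset u ∩ A.erase v) + if G.Adj v u then 1 else 0 := by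
  rw [inter_erase]
  split_ifs with hadj
  · have := pred_card_le_card_erase (s := G.neighborFinset u ∩ A) (a := v)
    omega
  · rw [erase_eq_of_notMem (by simp [G.adj_comm, hadj])]
    omega

/-- `R` is any set containing the nodes still to be processed. -/
structure GreedyInv (G : SimpleGraph V) [Fintype V] (τ : V → ℕ) (st : GreedyState V)
    (R : Finset V) : Prop where
  degree_le : ∀ u, G.degree u ≤ st.uns u + #(G.neighborFinset u ∩ (st.S0 ∪ R))
  thr_eq : ∀ u ∉ st.S1, st.thr u = τ u
  uns_add_le : ∀ u ∉ st.S1, st.uns u + τ u ≤ G.degree u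

lemma greedyInv_init (G : SimpleGraph V) [Fintype V] {τ : V → ℕ}
    (hτ : ∀ v, τ v ≤ G.degree v) : GreedyInv G τ ⟨∅, ∅, fun _ => 0, τ⟩ univ where
  degree_le u := by simp
  thr_eq _ _ := rfl
  uns_add_le u _ := by simpa using hτ u

namespace GreedyInv

variable {G : SimpleGraph V} [Fintype V] {τ : V → ℕ} {st : GreedyState V} {R : Finset V}

lemma mono {R' : Finset V} (h : GreedyInv G τ st R) (hR : R ⊆ R') : GreedyInv G τ st R' where
  degree_le u := (h.degree_le u).trans <| by gcongr
  thr_eq := h.thr_eq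
  uns_add_le := h.uns_add_le

lemma insert_S0 (h : GreedyInv G τ st R) (v : V) :
    GreedyInv G τ { st with S0 := insert v st.S0 } (R.erase v) where
  degree_le u := (h.degree_le u).trans <| by
    gcongr st.uns u + #(G.neighborFinset u ∩ ?_)
    intro x
    by_cases x = v <;> simp_all
  thr_eq := h.thr_eq
  uns_add_le := h.uns_add_le

lemma unselect (h : GreedyInv G τ st R) {v : V} {st' : GreedyState V} (hS0 : st'.S0 = st.S0)
    (huns : st'.uns = fun u => if G.Adj v u then st.uns u + 1 else st.uns u)
    (hS1 : st.S1 ⊆ st'.S1) (hblocked : blockedSet G st v ⊆ st'.S1)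
    (hthr : ∀ u ∉ st'.S1, st'.thr u = st.thr u) : GreedyInv G τ st' (R.erase v) where
  degree_le u := by
    have hdeg := h.degree_le u
    have herase := G.card_neighborFinset_inter_le_erase (st.S0 ∪ R) v u
    have hsub : #(G.neighborFinset u ∩ (st.S0 ∪ R).erase v)
        ≤ #(G.neighborFinset u ∩ (st.S0 ∪ R.erase v)) := by
      gcongr
      rw [erase_union_distrib]
      gcongr
      exact erase_subset v _
    simp only [hS0, huns]
    split_ifs at herase ⊢ <;> omega
  thr_eq u hu := (hthr u hu).trans (h.thr_eq u fun hu' => hu (hS1 hu'))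
  uns_add_le u hu := by
    have hu₀ : u ∉ st.S1 := fun hu' => hu (hS1 hu')
    have hle := h.uns_add_le u hu₀
    simp only [huns]
    split_ifs with hadj
    · have hne : st.uns u ≠ G.degree u - τ u := by
        rw [← h.thr_eq u hu₀]
        exact fun he => hu (hblocked (mem_filter.2 ⟨(G.mem_neighborFinset v u).2 hadj, he⟩))
      omega
    · exact hle

lemma greedyStep (h : GreedyInv G τ st R) (v : V) :
    GreedyInv G τ (greedyStep G st v) (R.erase v) := by
  unfold _root_.greedyStep
  dsimp only
  split_ifs with hnone hmany
  · exact h.unselect rfl rfl subset_rfl (by simp [card_eq_zero.1 hnone]) fun _ _ => rfl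
  · exact h.insert_S0 v
  · exact h.unselect rfl rfl subset_union_left subset_union_right fun u hu => by simp_all
  · exact h.insert_S0 v

lemma foldl (l : List V) (h : GreedyInv G τ st l.toFinset) :
    GreedyInv G τ (l.foldl (_root_.greedyStep G) st) ∅ := by
  induction l generalizing st with
  | nil => simpa using h
  | cons v t ih =>
    rw [List.toFinset_cons] at h
    exact ih ((h.greedyStep v).mono (erase_insert_subset v _))

lemma le_card_inter_S0 (h : GreedyInv G τ st ∅) (u : V) (hu : u ∉ st.S1) :
    τ u ≤ #(G.neighborFinset u ∩ st.S0) := by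
  have hdeg := h.degree_le u
  have hle := h.uns_add_le u hu
  rw [union_empty] at hdeg
  omega

end GreedyInv

lemma isTTS_of_le_card_inter (G : SimpleGraph V) [Fintype V] {τ : V → ℕ}
    (hτ : ∀ v, τ v ≤ G.degree v) {S₀ S₁ : Finset V}
    (h : ∀ u ∉ S₁, τ u ≤ #(G.neighborFinset u ∩ S₀)) :
    IsTTS G τ (fun i => if i = 0 then S₀ else if i = 1 then S₁ else ∅) 2 := by
  refine ⟨rfl, eq_univ_of_forall fun v => ?_⟩
  have hcover : S₁ ∪ Qseq G τ (fun i => if i = 0 then S₀ else if i = 1 then S₁ else ∅) 1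
      = univ := by
    refine eq_univ_of_forall fun u => ?_
    by_cases hu : u ∈ S₁
    · exact mem_union_left _ hu
    · simpa [Qseq] using Or.inr (h u hu)
  rw [Qseq, if_neg one_ne_zero, if_pos rfl, hcover]
  simpa using hτ v

theorem stmt17_general [Fintype V] (G : SimpleGraph V) (τ : V → ℕ)
    (hτ : ∀ v, τ v ≤ G.degree v)
    (l : List V) (hall : ∀ v, v ∈ l) :
    IsTTS G τ
      (fun i => if i = 0 then (greedyRun G τ l).S0
        else if i = 1 then (greedyRun G τ l).S1 else ∅) 2 := by
  have hinit : GreedyInv G τ ⟨∅, ∅, fun _ => 0, τ⟩ l.toFinset :=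
    (greedyInv_init G hτ).mono fun v _ => List.mem_toFinset.2 (hall v)
  exact isTTS_of_le_card_inter G hτ (hinit.foldl l).le_card_inter_S0

/-- The greedy algorithm (Algorithm 1), run on the nodes of `G` sorted in
ascending order of degree, produces sets `S₀`, `S₁` such that `S₀, S₁, ∅` is a timed
target set for `(G, τ)`: all nodes are positive after two steps. -/
theorem stmt17 [Fintype V] (G : SimpleGraph V) (τ : V → ℕ)
    (hτ : ∀ v, τ v ≤ G.degree v)
    (l : List V) (hnd : l.Nodup) (hall : ∀ v, v ∈ l)
    (hsorted : l.Pairwise fun a b => G.degree a ≤ G.degree b) :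
    IsTTS G τ
      (fun i => if i = 0 then (greedyRun G τ l).S0
        else if i = 1 then (greedyRun G τ l).S1 else ∅) 2 :=
  stmt17_general G τ hτ l hall
end
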